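/- Let T be a tree on a finite nonempty vertex type V with n = |V| vertices, and let m ≥ 1 be an integer. Let G be the Type-I growth graph of T with parameter m. Then the Wiener index of G satisfies W(G) = (m+1)^2·W(T) + m(m+1)·n^2 − m·n. -/

import Mathlib

/-!
Every vertex `x` of the growth graph lies over a vertex `base x` of `T`, at height 0 (the vertex
itself) or 1 (one of its new leaves). For `x ≠ y`,
`d(x, y) = d_T(base x, base y) + height x + height y`: projecting to `T` does not increase
distances, and a leaf can only be entered through its neighbour. Each fibre of `base` has `m + 1`
elements, so summing gives `(m + 1)² · 2W(T)` plus the height terms, minus `2mn` for the diagonal.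
-/

/-- The Wiener index of a finite simple graph: half the sum of the graph
distances over all ordered pairs of vertices. -/
noncomputable def wienerIndex {V : Type*} [Fintype V] (G : SimpleGraph V) : ℚ :=
  (∑ u : V, ∑ v : V, (G.dist u v : ℚ)) / 2

/-- The Type-I growth graph of `T` with parameter `m`:
attach `m` new pendant leaves to every vertex of `T`. -/
def typeIGrowth {V : Type*} (T : SimpleGraph V) (m : ℕ) :
    SimpleGraph (V ⊕ (V × Fin m)) :=
  SimpleGraph.fromRel (fun x y =>
    match x, y with
    | Sum.inl u, Sum.inl v => T.Adj u v
    | Sum.inl u, Sum.inr (v, _) => u = v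
    | _, _ => False)

namespace SimpleGraph

variable {V W : Type*} {G : SimpleGraph V} {H : SimpleGraph W}

theorem Walk.exists_walk_length_le_of_adj_imp {f : V → W}
    (hf : ∀ ⦃x y⦄, G.Adj x y → f x = f y ∨ H.Adj (f x) (f y)) {u v : V} (p : G.Walk u v) :
    ∃ q : H.Walk (f u) (f v), q.length ≤ p.length := by
  induction p with
  | nil => exact ⟨.nil, le_rfl⟩
  | cons h _ ih =>
    obtain ⟨q, hq⟩ := ih
    rcases hf h with heq | hadj
    · exact ⟨q.copy heq.symm rfl, by simp only [Walk.length_copy, Walk.length_cons]; omega⟩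
    · exact ⟨.cons hadj q, by simpa using hq⟩

theorem Reachable.dist_le_of_adj_imp {f : V → W}
    (hf : ∀ ⦃x y⦄, G.Adj x y → f x = f y ∨ H.Adj (f x) (f y)) {u v : V}
    (huv : G.Reachable u v) :
    H.dist (f u) (f v) ≤ G.dist u v := by
  obtain ⟨p, hp⟩ := huv.exists_walk_length_eq_dist
  obtain ⟨q, hq⟩ := p.exists_walk_length_le_of_adj_imp hf
  exact (dist_le q).trans (hp ▸ hq)

theorem dist_eq_dist_add_one_of_neighborSet_eq_singleton {x w z : V}
    (hw : G.neighborSet w = {z}) (hx : x ≠ w) (hxz : G.Reachable x z) :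
    G.dist x w = G.dist x z + 1 := by
  have hzw : G.Adj z w := G.adj_symm (by simp [← mem_neighborSet, hw])
  refine le_antisymm ?_ ?_
  · simpa [dist_eq_one_iff_adj.mpr hzw] using hzw.reachable.dist_triangle_right x
  · obtain ⟨p, hp⟩ := (hxz.trans hzw.reachable).symm.exists_walk_length_eq_dist
    cases p with
    | nil => exact absurd rfl hx
    | @cons _ y _ h q =>
      have hy : y = z := by simpa [← mem_neighborSet, hw] using h
      subst hy
      calc G.dist x y + 1 = G.dist y x + 1 := by rw [dist_comm]
        _ ≤ q.length + 1 := Nat.add_le_add_right (dist_le q) 1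
        _ = G.dist x w := by rw [dist_comm, ← hp, Walk.length_cons]

end SimpleGraph

namespace typeIGrowth

open SimpleGraph

variable {V : Type*} {T : SimpleGraph V} {m : ℕ}

def base : V ⊕ (V × Fin m) → V := Sum.elim id Prod.fst

def height : V ⊕ (V × Fin m) → ℕ := Sum.elim 0 1

theorem adj_inl_inl {u v : V} : (typeIGrowth T m).Adj (.inl u) (.inl v) ↔ T.Adj u v := by
  simp only [typeIGrowth, fromRel_adj, ne_eq, Sum.inl.injEq]
  exact ⟨fun ⟨_, h⟩ => h.elim id T.adj_symm, fun h => ⟨h.ne, .inl h⟩⟩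

theorem adj_inl_inr {u : V} {p : V × Fin m} :
    (typeIGrowth T m).Adj (.inl u) (.inr p) ↔ u = p.1 := by
  simp [typeIGrowth]

theorem not_adj_inr_inr {p q : V × Fin m} : ¬ (typeIGrowth T m).Adj (.inr p) (.inr q) := by
  simp [typeIGrowth]

theorem neighborSet_inr (p : V × Fin m) :
    (typeIGrowth T m).neighborSet (.inr p) = {.inl p.1} := by
  ext (u | q)
  · simp [(typeIGrowth T m).adj_comm, adj_inl_inr]
  · simp [not_adj_inr_inr]

theorem base_adj_or_eq {x y : V ⊕ (V × Fin m)} (h : (typeIGrowth T m).Adj x y) :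
    base x = base y ∨ T.Adj (base x) (base y) := by
  rcases x with u | p <;> rcases y with v | q
  · exact .inr (adj_inl_inl.mp h)
  · exact .inl (adj_inl_inr.mp h)
  · exact .inl (adj_inl_inr.mp h.symm).symm
  · exact absurd h not_adj_inr_inr

theorem dist_inl_inl (hT : T.Preconnected) (u v : V) :
    (typeIGrowth T m).dist (.inl u) (.inl v) = T.dist u v := by
  obtain ⟨p, hp⟩ := (hT u v).exists_walk_length_eq_dist
  obtain ⟨q, hq⟩ := p.exists_walk_length_le_of_adj_imp (H := typeIGrowth T m)
    fun _ _ h => .inr (adj_inl_inl.mpr h)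
  refine le_antisymm ((dist_le q).trans (hp ▸ hq)) ?_
  exact q.reachable.dist_le_of_adj_imp (f := base) fun _ _ => base_adj_or_eq

theorem reachable_inl_inl (hT : T.Preconnected) (u v : V) :
    (typeIGrowth T m).Reachable (.inl u) (.inl v) := by
  obtain ⟨q, -⟩ := (hT u v).some.exists_walk_length_le_of_adj_imp (H := typeIGrowth T m)
    fun _ _ h => .inr (adj_inl_inl.mpr h)
  exact q.reachable

theorem dist_inl_inr (hT : T.Preconnected) (u : V) (p : V × Fin m) :
    (typeIGrowth T m).dist (.inl u) (.inr p) = T.dist u p.1 + 1 := by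
  rw [dist_eq_dist_add_one_of_neighborSet_eq_singleton (neighborSet_inr p) Sum.inl_ne_inr
    (reachable_inl_inl hT u p.1), dist_inl_inl hT]

theorem dist_inr_inr (hT : T.Preconnected) {p q : V × Fin m} (hpq : p ≠ q) :
    (typeIGrowth T m).dist (.inr p) (.inr q) = T.dist p.1 q.1 + 2 := by
  have hpq' : (typeIGrowth T m).Reachable (.inr p) (.inl q.1) :=
    (adj_inl_inr.mpr rfl).symm.reachable.trans (reachable_inl_inl hT p.1 q.1)
  rw [dist_eq_dist_add_one_of_neighborSet_eq_singleton (neighborSet_inr q) (by simpa using hpq)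
    hpq', dist_comm, dist_inl_inr hT, T.dist_comm]

-- Stated without subtraction; off the diagonal it reads `dist x y = dist_T + height x + height y`.
theorem dist_add_ite_eq [DecidableEq V] (hT : T.Preconnected) (x y : V ⊕ (V × Fin m)) :
    (typeIGrowth T m).dist x y + (if x = y then 2 * height x else 0) =
      T.dist (base x) (base y) + height x + height y := by
  rcases x with u | p <;> rcases y with v | q
  · simp [dist_inl_inl hT, base, height]
  · simp [dist_inl_inr hT, base, height]
  · simp [dist_comm (u := Sum.inr p), dist_inl_inr hT, base, height, T.dist_comm]
  · by_cases hpq : p = q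
    · subst hpq; simp [base, height]
    · simp [dist_inr_inr hT hpq, hpq, base, height]

variable [Fintype V]

theorem sum_base {M : Type*} [AddCommMonoid M] (f : V → M) :
    ∑ x : V ⊕ (V × Fin m), f (base x) = (m + 1) • ∑ v, f v := by
  rw [Fintype.sum_sum_type, Fintype.sum_prod_type]
  simp [base, ← Finset.smul_sum, add_smul, add_comm]

theorem sum_height : ∑ x : V ⊕ (V × Fin m), height x = m * Fintype.card V := by
  simp [Fintype.sum_sum_type, height, mul_comm]

theorem sum_sum_dist_add [DecidableEq V] (hT : T.Preconnected) :
    ∑ x, ∑ y, (typeIGrowth T m).dist x y + 2 * (m * Fintype.card V) =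
      (m + 1) ^ 2 * ∑ u, ∑ v, T.dist u v +
        2 * ((m + 1) * Fintype.card V) * (m * Fintype.card V) := by
  have hdiag : ∑ x : V ⊕ (V × Fin m), ∑ y, (if x = y then 2 * height x else 0) =
      2 * (m * Fintype.card V) := by
    rw [← sum_height, Finset.mul_sum]
    simp
  rw [← hdiag, ← Finset.sum_add_distrib]
  simp_rw [← Finset.sum_add_distrib, dist_add_ite_eq hT, Finset.sum_add_distrib]
  rw [sum_base (fun u => ∑ y, T.dist u (base y))]
  simp only [sum_base (T.dist _), Finset.sum_const, Finset.card_univ, smul_eq_mul,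
    ← Finset.mul_sum, sum_height, Fintype.card_sum, Fintype.card_prod, Fintype.card_fin]
  ring

end typeIGrowth

theorem wiener_typeIGrowth {V : Type*} [Fintype V]
    (T : SimpleGraph V) (hT : T.IsTree) (m : ℕ) :
    wienerIndex (typeIGrowth T m) =
      ((m : ℚ) + 1) ^ 2 * wienerIndex T
        + (m : ℚ) * ((m : ℚ) + 1) * (Fintype.card V : ℚ) ^ 2
        - (m : ℚ) * (Fintype.card V : ℚ) := by
  classical
  have h := congrArg (Nat.cast : ℕ → ℚ)
    (typeIGrowth.sum_sum_dist_add (m := m) hT.connected.preconnected)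
  push_cast at h
  rw [wienerIndex, wienerIndex]
  linear_combination h / 2
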